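/- Let F be a field of characteristic different from 2 in which −1 is a square, a ∈ F^× a non-square, E = F(√a), and G = Gal(E/F), a group of order 2. Then the F_2[G]-module E^×/E^{×2} is NOT a free F_2[G]-module. (In the paper's notation: for p = 2 and √−1 ∈ F, H^1(E) is never a free F_2[Gal(E/F)]-module.) -/

import Mathlib

noncomputable section

/-- The subgroup of `p`-th powers in the multiplicative group of units of a field `E`. -/
def pthPowers (E : Type*) [Field E] (p : ℕ) : Subgroup Eˣ :=
  (powMonoidHom p : Eˣ →* Eˣ).range

/-- The group `E^× / E^{×p}`, written additively. -/
abbrev KModP (E : Type*) [Field E] (p : ℕ) : Type _ :=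
  Additive (Eˣ ⧸ pthPowers E p)

instance kModPModule (E : Type*) [Field E] (p : ℕ) : Module (ZMod p) (KModP E p) :=
  AddCommGroup.zmodModule (n := p) (G := KModP E p) (by
    intro x
    induction x using Additive.rec with
    | _ q =>
      induction q using QuotientGroup.induction_on with
      | _ u =>
        rw [← ofMul_pow, ← QuotientGroup.mk_pow, show ((QuotientGroup.mk (u ^ p) :
          Eˣ ⧸ pthPowers E p)) = 1 from (QuotientGroup.eq_one_iff _).2 ⟨u, rfl⟩]
        rfl)

/-- The action of the Galois group on `E^×/E^{×p}` as a representation over `ZMod p`. -/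
def galRep (F E : Type*) [Field F] [Field E] [Algebra F E] (p : ℕ) :
    Representation (ZMod p) (E ≃ₐ[F] E) (KModP E p) where
  toFun σ :=
    AddMonoidHom.toZModLinearMap p <| MonoidHom.toAdditive <|
      QuotientGroup.map (pthPowers E p) (pthPowers E p)
        (Units.map (σ : E →* E))
        (by rintro x ⟨u, rfl⟩
            exact ⟨Units.map (σ : E →* E) u, by simp [powMonoidHom, map_pow]⟩)
  map_one' := by
    ext x
    induction x using Additive.rec with
    | _ q =>
      induction q using QuotientGroup.induction_on with
      | _ u => rfl
  map_mul' := fun σ τ => by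
    ext x
    induction x using Additive.rec with
    | _ q =>
      induction q using QuotientGroup.induction_on with
      | _ u => rfl

/-!
Let `σ` generate `G` and put `t = 1 + σ ∈ 𝔽₂[G]`. Writing `c = x + yσ`, one finds
`t * c = (x + y) t`, so `t * c = 0` forces `c = x t`; coordinatewise, in a free `𝔽₂[G]`-module
every element killed by `t` is a multiple of `t`. The class of `α = √a` is killed by `t`, because
`α σ(α) = -α² = (√-1 α)²`. If it were `t [u] = [u σ(u)]`, then `α = u σ(u) f²`; applying `σ`
gives `σ(f)² = -f²`, so `σ(f) = ±√-1 f` and `f = σ(σ(f)) = -f`, which is absurd.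
-/

theorem Module.Free.exists_smul_eq_of_smul_eq_zero {R M : Type*} [Ring R] [AddCommGroup M]
    [Module R M] [Module.Free R M] {t : R} (ht : ∀ c : R, t * c = 0 → ∃ d, t * d = c)
    {m : M} (hm : t • m = 0) : ∃ n, t • n = m := by
  choose! d hd using ht
  let b := Module.Free.chooseBasis R M
  have hcoord : ∀ j, t * b.repr m j = 0 := fun j => by
    simpa using congr($(congrArg b.repr hm) j)
  refine ⟨(b.repr m).sum fun j c => d c • b j, ?_⟩
  conv_rhs => rw [← b.linearCombination_repr m, Finsupp.linearCombination_apply]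
  rw [Finsupp.smul_sum]
  exact Finsupp.sum_congr fun j _ => by rw [smul_smul, hd _ (hcoord j)]

namespace MonoidAlgebra

variable {k G : Type*} [Ring k] [CharP k 2] [Group G] {σ : G}

theorem exists_one_add_of_mul_eq_of_mul_eq_zero (hσ : σ ≠ 1) (hG : ∀ g, g = 1 ∨ g = σ)
    {c : MonoidAlgebra k G} (hc : (1 + of k G σ) * c = 0) : ∃ d, (1 + of k G σ) * d = c := by
  have hσσ : σ⁻¹ = σ := by
    rcases hG σ⁻¹ with h | h
    · exact absurd (inv_eq_one.1 h) hσ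
    · exact h
  have hcoeff : c.coeff σ = c.coeff 1 := by
    have h := congrArg (fun x => x.coeff 1) hc
    simp only [of_apply, add_mul, one_mul, coeff_add, Finsupp.coe_add, Pi.add_apply,
      coeff_single_mul_apply, hσσ, mul_one, coeff_zero, Finsupp.coe_zero, Pi.zero_apply] at h
    exact (CharTwo.add_eq_zero.1 h).symm
  refine ⟨single 1 (c.coeff 1), ?_⟩
  ext g
  rcases hG g with rfl | rfl
  · simp [add_mul, hσ]
  · simp [add_mul, hσ, hcoeff]

end MonoidAlgebra

section QuadraticExtension

open Polynomial

variable {F E : Type*} [Field F] [Field E] [Algebra F E] {a : F} {α : E}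

theorem AlgEquiv.ext_of_adjoin_singleton_eq_top (hgen : Algebra.adjoin F {α} = ⊤)
    {g h : E ≃ₐ[F] E} (hgh : g α = h α) : g = h :=
  AlgEquiv.coe_toAlgHom_injective <| AlgHom.ext_of_adjoin_eq_top hgen <| by
    rintro x rfl
    exact hgh

theorem exists_algEquiv_apply_eq_neg (hns : ∀ f : F, f ^ 2 ≠ a) (hα : α ^ 2 = algebraMap F E a)
    (hgen : Algebra.adjoin F {α} = ⊤) : ∃ σ : E ≃ₐ[F] E, σ α = -α := by
  have hmonic : (X ^ 2 - C a).Monic := monic_X_pow_sub_C a two_ne_zero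
  have hroot : ∀ β : E, β ^ 2 = algebraMap F E a → aeval β (X ^ 2 - C a) = 0 := fun β hβ => by
    simp [hβ]
  have hminpoly : minpoly F α = X ^ 2 - C a := (minpoly.eq_of_irreducible_of_monic
    (X_pow_sub_C_irreducible_of_prime Nat.prime_two hns) (hroot α hα) hmonic).symm
  let pb := PowerBasis.ofAdjoinEqTop ⟨_, hmonic, hroot α hα⟩ hgen
  let τ : E →ₐ[F] E := pb.lift (-α) <| by
    rw [show pb.gen = α from rfl, hminpoly]
    exact hroot (-α) (by rw [neg_sq, hα])
  have hτ : τ α = -α := pb.lift_gen _ _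
  have hττ : τ.comp τ = AlgHom.id F E := AlgHom.ext_of_adjoin_eq_top hgen <| by
    rintro x rfl
    simp [hτ]
  exact ⟨AlgEquiv.ofAlgHom τ τ hττ hττ, hτ⟩

theorem algEquiv_eq_one_or_eq (hα : α ^ 2 = algebraMap F E a) (hgen : Algebra.adjoin F {α} = ⊤)
    {σ : E ≃ₐ[F] E} (hσ : σ α = -α) (g : E ≃ₐ[F] E) : g = 1 ∨ g = σ := by
  have hgα : g α ^ 2 = α ^ 2 := by rw [← map_pow, hα, AlgEquiv.commutes]
  rcases sq_eq_sq_iff_eq_or_eq_neg.1 hgα with h | h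
  · exact .inl (AlgEquiv.ext_of_adjoin_singleton_eq_top hgen h)
  · exact .inr (AlgEquiv.ext_of_adjoin_singleton_eq_top hgen (h.trans hσ.symm))

theorem algEquiv_mul_self_eq_one (hgen : Algebra.adjoin F {α} = ⊤) {σ : E ≃ₐ[F] E}
    (hσ : σ α = -α) : σ * σ = 1 :=
  AlgEquiv.ext_of_adjoin_singleton_eq_top hgen <| by simp [hσ]

end QuadraticExtension

namespace AlgEquiv

variable {F E : Type*} [Field F] [Field E] [Algebra F E] {σ : E ≃ₐ[F] E} {j : E}

theorem eq_zero_of_apply_eq_mul (hσσ : σ * σ = 1) (h2 : (2 : E) ≠ 0) (hj : j ^ 2 = -1)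
    (hσj : σ j = j) {f : E} (hf : σ f = j * f) : f = 0 := by
  have hff : f = -f := calc
    f = σ (σ f) := (DFunLike.congr_fun hσσ f).symm
    _ = j ^ 2 * f := by rw [hf, map_mul, hσj, hf]; ring
    _ = -f := by rw [hj]; ring
  exact (mul_eq_zero.1 (show 2 * f = 0 by linear_combination hff)).resolve_left h2

theorem eq_zero_of_apply_sq_eq_neg_sq (hσσ : σ * σ = 1) (h2 : (2 : E) ≠ 0) (hj : j ^ 2 = -1)
    (hσj : σ j = j) {f : E} (hf : σ f ^ 2 = -f ^ 2) : f = 0 := by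
  rcases sq_eq_sq_iff_eq_or_eq_neg.1 (show σ f ^ 2 = (j * f) ^ 2 by rw [hf, mul_pow, hj]; ring)
    with h | h
  · exact eq_zero_of_apply_eq_mul hσσ h2 hj hσj h
  · exact eq_zero_of_apply_eq_mul hσσ h2 (j := -j) (by rw [neg_sq, hj]) (by rw [map_neg, hσj])
      (by rw [h, neg_mul])

theorem ne_mul_apply_mul_sq (hσσ : σ * σ = 1) (h2 : (2 : E) ≠ 0) (hj : j ^ 2 = -1)
    (hσj : σ j = j) {α : E} (hα : α ≠ 0) (hσα : σ α = -α) (u f : E) : α ≠ u * σ u * f ^ 2 := by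
  intro h
  have hu : u * σ u ≠ 0 := fun hu => hα (by rw [h, hu, zero_mul])
  have hσu : σ (σ u) = u := DFunLike.congr_fun hσσ u
  have hf : σ f ^ 2 = -f ^ 2 := by
    apply mul_left_cancel₀ hu
    have := congrArg σ h
    rw [hσα, map_mul, map_mul, map_pow, hσu, h] at this
    linear_combination -this
  exact hα (by rw [h, eq_zero_of_apply_sq_eq_neg_sq hσσ h2 hj hσj hf]; ring)

end AlgEquiv

section GalRepClass

variable (F : Type*) {E : Type*} [Field F] [Field E] [Algebra F E] (p : ℕ)

def galRepClass (u : Eˣ) : (galRep F E p).asModule :=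
  (galRep F E p).asModuleEquiv.symm (Additive.ofMul (QuotientGroup.mk u))

variable {F p}

theorem galRepClass_surjective : Function.Surjective (galRepClass F p (E := E)) := by
  intro m
  obtain ⟨u, hu⟩ := QuotientGroup.mk_surjective (Additive.toMul ((galRep F E p).asModuleEquiv m))
  refine ⟨u, ?_⟩
  simp [galRepClass, hu]

theorem galRepClass_mul (u v : Eˣ) :
    galRepClass F p (u * v) = galRepClass F p u + galRepClass F p v := by
  simp only [galRepClass, QuotientGroup.mk_mul, ofMul_mul, map_add]

theorem galRepClass_eq_zero_iff {u : Eˣ} : galRepClass F p u = 0 ↔ ∃ f : Eˣ, f ^ p = u := by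
  simp only [galRepClass, LinearEquiv.map_eq_zero_iff, ofMul_eq_zero, QuotientGroup.eq_one_iff]
  rfl

theorem galRepClass_eq_galRepClass_iff {u v : Eˣ} :
    galRepClass F p u = galRepClass F p v ↔ ∃ f : Eˣ, v = u * f ^ p := by
  simp only [galRepClass, EmbeddingLike.apply_eq_iff_eq, QuotientGroup.eq]
  exact exists_congr fun f => eq_comm.trans inv_mul_eq_iff_eq_mul

theorem of_smul_galRepClass (g : E ≃ₐ[F] E) (u : Eˣ) :
    MonoidAlgebra.of (ZMod p) _ g • galRepClass F p u =
      galRepClass F p (Units.map (g : E →* E) u) :=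
  ((galRep F E p).asModuleEquiv_symm_map_rho g _).symm

theorem one_add_of_smul_galRepClass (g : E ≃ₐ[F] E) (u : Eˣ) :
    (1 + MonoidAlgebra.of (ZMod p) _ g) • galRepClass F p u =
      galRepClass F p (u * Units.map (g : E →* E) u) := by
  rw [add_smul, one_smul, of_smul_galRepClass, galRepClass_mul]

end GalRepClass

/-- Let `F` be a field of characteristic different from 2 in which `-1` is
a square, `a ∈ F^×` a non-square, `E = F(√a)`, and `G = Gal(E/F)`.  Then the
`F_2[G]`-module `E^×/E^{×2}` is NOT a free `F_2[G]`-module. -/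
theorem h1_not_free_two_with_sqrt_neg_one
    {F E : Type*} [Field F] [Field E] [Algebra F E]
    (hchar : (2 : F) ≠ 0)
    (i : F) (hi : i ^ 2 = -1)
    (a : F) (ha : a ≠ 0) (hns : ∀ f : F, f ^ 2 ≠ a)
    (α : E) (hα : α ^ 2 = algebraMap F E a)
    (hgenα : Algebra.adjoin F {α} = ⊤) :
    ¬ Module.Free (MonoidAlgebra (ZMod 2) (E ≃ₐ[F] E)) (galRep F E 2).asModule := by
  intro hfree
  have h2 : (2 : E) ≠ 0 := map_ofNat (algebraMap F E) 2 ▸ (map_ne_zero _).2 hchar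
  have hα0 : α ≠ 0 := fun h => ha (by simpa [h] using hα.symm)
  obtain ⟨σ, hσα⟩ := exists_algEquiv_apply_eq_neg hns hα hgenα
  have hσσ := algEquiv_mul_self_eq_one hgenα hσα
  have hσ1 : σ ≠ 1 := by
    rintro rfl
    rw [AlgEquiv.one_apply] at hσα
    have h2α : 2 * α = 0 := by linear_combination hσα
    exact hα0 ((mul_eq_zero.1 h2α).resolve_left h2)
  have hi' : algebraMap F E i ^ 2 = -1 := by rw [← map_pow, hi, map_neg, map_one]
  let uα := Units.mk0 α hα0
  have hkill : (1 + MonoidAlgebra.of (ZMod 2) _ σ) • galRepClass F 2 uα = 0 := by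
    rw [one_add_of_smul_galRepClass, galRepClass_eq_zero_iff]
    refine ⟨Units.mk0 (algebraMap F E i * α) (mul_ne_zero ?_ hα0), Units.ext ?_⟩
    · exact fun h => by simp [h] at hi'
    · simp only [Units.val_pow_eq_pow_val, Units.val_mul, Units.val_mk0, Units.coe_map,
        MonoidHom.coe_coe, uα, hσα, mul_pow, hi']
      ring
  obtain ⟨n, hn⟩ := Module.Free.exists_smul_eq_of_smul_eq_zero
    (fun c => MonoidAlgebra.exists_one_add_of_mul_eq_of_mul_eq_zero hσ1
      (algEquiv_eq_one_or_eq hα hgenα hσα)) hkill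
  obtain ⟨u, rfl⟩ := galRepClass_surjective n
  rw [one_add_of_smul_galRepClass, galRepClass_eq_galRepClass_iff] at hn
  obtain ⟨f, hf⟩ := hn
  exact AlgEquiv.ne_mul_apply_mul_sq hσσ h2 hi' (σ.commutes i) hα0 hσα u f
    (by simpa [uα] using congrArg Units.val hf)
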